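/- arXiv:1709.02860 — 9 statements merged into one kernel-verified Lean document; each statement's English description precedes it below -/
import Mathlib

section
/- If y₁, y₂ ∈ ℝⁿ satisfy y₁ᵀy₂ ≥ 0, then there exist positive semi-definite symmetric n×n matrices W₁, W₂ such that W₁ + W₂ = I, y₁ = W₁(y₁ + y₂), and y₂ = W₂(y₁ + y₂). -/
/-!
Put `d = y₁ ⬝ᵥ (y₁ + y₂) = ‖y₁‖² + y₁ ⬝ᵥ y₂ ≥ ‖y₁‖²` and take `W₁ = d⁻¹ y₁ y₁ᵀ`, `W₂ = I - W₁`.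
Then `W₁ (y₁ + y₂) = y₁`, `W₁` is positive semidefinite as a nonnegative multiple of a Gram
matrix, and `W₂` is positive semidefinite because by Cauchy–Schwarz the rank-one matrix `W₁`
has largest eigenvalue `d⁻¹ ‖y₁‖² ≤ 1`. (If `d = 0` then `y₁ = 0`, and `W₁ = 0` works.)
-/

open Matrix

variable {ι : Type*} [Fintype ι]

lemma dotProduct_self_nonneg_real (x : ι → ℝ) : 0 ≤ x ⬝ᵥ x := by
  simpa using dotProduct_self_star_nonneg x

lemma dotProduct_sq_le_real (x y : ι → ℝ) : (x ⬝ᵥ y) ^ 2 ≤ (x ⬝ᵥ x) * (y ⬝ᵥ y) := by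
  simpa [dotProduct, sq] using Finset.sum_mul_sq_le_sq_mul_sq Finset.univ x y

lemma vecMulVec_self_mulVec (y x : ι → ℝ) : vecMulVec y y *ᵥ x = (y ⬝ᵥ x) • y := by
  simp [vecMulVec_mulVec]

lemma posSemidef_vecMulVec_self (y : ι → ℝ) : (vecMulVec y y).PosSemidef := by
  simpa using posSemidef_vecMulVec_self_star y

lemma posSemidef_one_sub_smul_vecMulVec_self [DecidableEq ι] {c : ℝ} {y : ι → ℝ}
    (hc : c * (y ⬝ᵥ y) ≤ 1) : (1 - c • vecMulVec y y).PosSemidef := by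
  refine .of_dotProduct_mulVec_nonneg
    (isHermitian_one.sub (((posSemidef_vecMulVec_self y).1.smul (.all c)))) fun x ↦ ?_
  have hcs := dotProduct_sq_le_real y x
  have hxx := dotProduct_self_nonneg_real x
  have hyy := dotProduct_self_nonneg_real y
  simp only [star_trivial, sub_mulVec, one_mulVec, smul_mulVec, vecMulVec_self_mulVec,
    dotProduct_sub, dotProduct_smul, smul_eq_mul, dotProduct_comm x y, sub_nonneg]
  rcases le_or_gt c 0 with hc0 | hc0
  · nlinarith [sq_nonneg (y ⬝ᵥ x)]
  · nlinarith [mul_le_mul_of_nonneg_left hcs hc0.le]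

theorem stmt0 (n : ℕ) (y₁ y₂ : Fin n → ℝ) (h : 0 ≤ y₁ ⬝ᵥ y₂) :
    ∃ W₁ W₂ : Matrix (Fin n) (Fin n) ℝ,
      W₁.PosSemidef ∧ W₂.PosSemidef ∧ W₁ + W₂ = 1 ∧
      W₁ *ᵥ (y₁ + y₂) = y₁ ∧ W₂ *ᵥ (y₁ + y₂) = y₂ := by
  set d := y₁ ⬝ᵥ (y₁ + y₂)
  have hd : y₁ ⬝ᵥ y₁ ≤ d := by simp only [d, dotProduct_add]; linarith
  have hd₀ : 0 ≤ d := (dotProduct_self_nonneg_real y₁).trans hd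
  have hW₁ : (d⁻¹ • vecMulVec y₁ y₁) *ᵥ (y₁ + y₂) = y₁ := by
    rw [smul_mulVec, vecMulVec_self_mulVec, smul_smul]
    rcases hd₀.eq_or_lt with hd0 | hd0
    · have hy₁ : y₁ = 0 :=
        dotProduct_self_eq_zero.mp ((hd0 ▸ hd).antisymm (dotProduct_self_nonneg_real y₁))
      simp [hy₁]
    · rw [inv_mul_cancel₀ hd0.ne', one_smul]
  refine ⟨d⁻¹ • vecMulVec y₁ y₁, 1 - d⁻¹ • vecMulVec y₁ y₁,
    (posSemidef_vecMulVec_self y₁).smul (inv_nonneg.2 hd₀),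
    posSemidef_one_sub_smul_vecMulVec_self (inv_mul_le_one_of_le₀ hd hd₀),
    add_sub_cancel _ _, hW₁, ?_⟩
  rw [sub_mulVec, one_mulVec, hW₁, add_sub_cancel_left]
end

section
/- For any y, z ∈ ℝⁿ with ‖z‖ ≤ ‖y‖, there exists a symmetric n×n matrix W with −I ≤ W ≤ I (in the Loewner order) such that z = W y. -/
/-!
The reflection in the hyperplane orthogonal to `‖z‖ • y - ‖y‖ • z` sends `‖z‖ • y` to `‖y‖ • z`,
since both have norm `‖y‖ ‖z‖`. Scaling it by `‖z‖ / ‖y‖ ≤ 1` gives a self-adjoint contraction `T`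
with `T y = z`, and a self-adjoint contraction satisfies `-1 ≤ T ≤ 1` because
`|⟪T x, x⟫| ≤ ‖x‖²`. Its matrix in the standard basis is the required `W`.
-/

open Matrix

theorem Submodule.isSymmetric_reflection {𝕜 E : Type*} [RCLike 𝕜] [NormedAddCommGroup E]
    [InnerProductSpace 𝕜 E] (K : Submodule 𝕜 E) [K.HasOrthogonalProjection] :
    (K.reflection : E →ₗ[𝕜] E).IsSymmetric := fun x y => by
  conv_lhs => rw [← K.reflection_reflection y]
  exact K.reflection.inner_map_map x (K.reflection y)

section Contraction

variable {𝕜 E : Type*} [RCLike 𝕜] [NormedAddCommGroup E] [InnerProductSpace 𝕜 E]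
  {T : E →ₗ[𝕜] E}

theorem LinearMap.abs_re_inner_map_self_le_of_norm_map_le (hT : ∀ x, ‖T x‖ ≤ ‖x‖) (x : E) :
    |RCLike.re (inner 𝕜 (T x) x)| ≤ ‖x‖ ^ 2 :=
  calc |RCLike.re (inner 𝕜 (T x) x)| ≤ ‖inner 𝕜 (T x) x‖ := RCLike.abs_re_le_norm _
    _ ≤ ‖T x‖ * ‖x‖ := norm_inner_le_norm _ _
    _ ≤ ‖x‖ ^ 2 := by rw [sq]; gcongr; exact hT x

theorem LinearMap.IsSymmetric.isPositive_one_sub (hT : T.IsSymmetric)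
    (hT1 : ∀ x, ‖T x‖ ≤ ‖x‖) : (1 - T).IsPositive := by
  refine ⟨LinearMap.IsSymmetric.id.sub hT, fun x => ?_⟩
  have := abs_le.1 (abs_re_inner_map_self_le_of_norm_map_le hT1 x)
  simp only [LinearMap.sub_apply, Module.End.one_apply, inner_sub_left, map_sub,
    inner_self_eq_norm_sq]
  linarith [this.2]

theorem LinearMap.IsSymmetric.isPositive_add_one (hT : T.IsSymmetric)
    (hT1 : ∀ x, ‖T x‖ ≤ ‖x‖) : (T + 1).IsPositive := by
  refine ⟨hT.add LinearMap.IsSymmetric.id, fun x => ?_⟩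
  have := abs_le.1 (abs_re_inner_map_self_le_of_norm_map_le hT1 x)
  simp only [LinearMap.add_apply, Module.End.one_apply, inner_add_left, map_add,
    inner_self_eq_norm_sq]
  linarith [this.1]

end Contraction

theorem exists_isSymmetric_norm_map_le_apply_eq {E : Type*} [NormedAddCommGroup E]
    [InnerProductSpace ℝ E] {y z : E} (h : ‖z‖ ≤ ‖y‖) :
    ∃ T : E →ₗ[ℝ] E, T.IsSymmetric ∧ (∀ x, ‖T x‖ ≤ ‖x‖) ∧ T y = z := by
  let R := (ℝ ∙ (‖z‖ • y - ‖y‖ • z))ᗮ.reflection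
  have hR : R (‖z‖ • y) = ‖y‖ • z := Submodule.reflection_sub (by simp [norm_smul, mul_comm])
  refine ⟨(‖z‖ / ‖y‖) • (R : E →ₗ[ℝ] E), (Submodule.isSymmetric_reflection _).smul ?_,
    fun x => ?_, ?_⟩
  · exact conj_trivial _
  · calc ‖(‖z‖ / ‖y‖) • R x‖ = ‖z‖ / ‖y‖ * ‖x‖ := by
          rw [norm_smul, R.norm_map, Real.norm_of_nonneg (by positivity)]
      _ ≤ 1 * ‖x‖ := by gcongr; exact div_le_one_of_le₀ h (norm_nonneg y)
      _ = ‖x‖ := one_mul _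
  · rcases (norm_nonneg y).eq_or_lt with hy | hy
    · have hz : z = 0 := norm_le_zero_iff.1 (hy ▸ h)
      simp [← hy, hz]
    · calc (‖z‖ / ‖y‖) • R y = ‖y‖⁻¹ • R (‖z‖ • y) := by
            rw [map_smul, smul_smul, div_eq_inv_mul]
        _ = z := by rw [hR, inv_smul_smul₀ hy.ne']

theorem stmt2 (n : ℕ) (y z : EuclideanSpace ℝ (Fin n)) (h : ‖z‖ ≤ ‖y‖) :
    ∃ W : Matrix (Fin n) (Fin n) ℝ, W.IsSymm ∧
      (W - (-1)).PosSemidef ∧ ((1 : Matrix (Fin n) (Fin n) ℝ) - W).PosSemidef ∧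
      (z : Fin n → ℝ) = W *ᵥ (y : Fin n → ℝ) := by
  obtain ⟨T, hT, hT1, hTy⟩ := exists_isSymmetric_norm_map_le_apply_eq h
  obtain ⟨W, rfl⟩ := toEuclideanLin.surjective T
  refine ⟨W, isHermitian_iff_isSymm.1 (isSymmetric_toEuclideanLin_iff.1 hT), ?_, ?_, ?_⟩
  · rw [← isPositive_toEuclideanLin_iff, map_sub, map_neg, toLpLin_one, sub_neg_eq_add]
    exact hT.isPositive_add_one hT1
  · rw [← isPositive_toEuclideanLin_iff, map_sub, toLpLin_one]
    exact hT.isPositive_one_sub hT1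
  · rw [← hTy, toLpLin_apply]
end

section
/- Let U₁, U₂ be positive semi-definite symmetric n×n matrices with U = U₁ + U₂ positive definite. Then the matrix U₂U⁻¹U₁ is positive semi-definite. -/
/-!
The block matrix `[[A, A], [A, A + B]] = [1 1]ᴴ A [1 1] + [0 1]ᴴ B [0 1]` is positive
semidefinite, so its Schur complement with respect to the positive definite block `A + B`,
namely `A - A (A + B)⁻¹ A = A (A + B)⁻¹ B`, is positive semidefinite as well.
-/

open Matrix

namespace Matrix

lemma conjTranspose_fromCols_mul_mul_fromCols {k m₁ m₂ R : Type*} [Fintype k] [Semiring R]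
    [StarRing R] (C : Matrix k m₁ R) (D : Matrix k m₂ R) (M : Matrix k k R) :
    (fromCols C D)ᴴ * M * fromCols C D =
      fromBlocks (Cᴴ * M * C) (Cᴴ * M * D) (Dᴴ * M * C) (Dᴴ * M * D) := by
  rw [conjTranspose_fromCols_eq_fromRows_conjTranspose, fromRows_mul, fromRows_mul_fromCols]

variable {n R : Type*} [Fintype n] [DecidableEq n]

lemma PosSemidef.fromBlocks_self_add [Ring R] [PartialOrder R] [StarRing R] [AddLeftMono R]
    {A B : Matrix n n R} (hA : A.PosSemidef) (hB : B.PosSemidef) :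
    (fromBlocks A A A (A + B)).PosSemidef := by
  have hAA := hA.conjTranspose_mul_mul_same (fromCols (1 : Matrix n n R) (1 : Matrix n n R))
  have hB0 := hB.conjTranspose_mul_mul_same (fromCols (0 : Matrix n n R) (1 : Matrix n n R))
  rw [conjTranspose_fromCols_mul_mul_fromCols] at hAA hB0
  simpa [fromBlocks_add] using hAA.add hB0

lemma PosSemidef.mul_inv_add_mul [Field R] [PartialOrder R] [StarRing R] [StarOrderedRing R]
    {A B : Matrix n n R} (hA : A.PosSemidef) (hB : B.PosSemidef) (hAB : (A + B).PosDef) :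
    (A * (A + B)⁻¹ * B).PosSemidef := by
  have := hAB.isUnit.invertible
  have hSchur : (A - A * (A + B)⁻¹ * Aᴴ).PosSemidef :=
    (hAB.fromBlocks₂₂ A A).mp (by rw [hA.isHermitian.eq]; exact hA.fromBlocks_self_add hB)
  have hcomplement : A * (A + B)⁻¹ * B = A - A * (A + B)⁻¹ * Aᴴ := by
    rw [hA.isHermitian.eq, eq_sub_iff_add_eq, mul_assoc, mul_assoc, ← mul_add, ← mul_add,
      add_comm B, inv_mul_of_invertible, mul_one]
  rwa [hcomplement]

end Matrix

theorem stmt4 (n : ℕ) (U₁ U₂ : Matrix (Fin n) (Fin n) ℝ)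
    (h₁ : U₁.PosSemidef) (h₂ : U₂.PosSemidef) (hU : (U₁ + U₂).PosDef) :
    (U₂ * (U₁ + U₂)⁻¹ * U₁).PosSemidef := by
  rw [add_comm] at hU ⊢
  exact h₂.mul_inv_add_mul h₁ hU
end

section
/- Let S₁ < S₂ be symmetric n×n matrices (S₂ − S₁ positive definite), and let 𝒮ᵢ = {(h, Sᵢh) : h ∈ ℝⁿ} be the corresponding Lagrangian graphs in ℝ²ⁿ. If S is a symmetric matrix with S₁ ≤ S ≤ S₂ and v = (x, Sx), then writing v = v₁ + v₂ with vᵢ ∈ 𝒮ᵢ, one has ω(v₁, v₂) = xᵀ(S₂ − S)(S₂ − S₁)⁻¹(S − S₁)x ≥ 0. -/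
/-!
Put `A = S₂ - S` and `B = S - S₁`, so that `S₂ - S₁ = A + B`. Comparing momenta in
`(x, S x) = (x₁, S₁ x₁) + (x₂, S₂ x₂)` gives `A x₂ = B x₁`, hence `(A + B) x₁ = A x` and
`(A + B) x₂ = B x`. The symplectic form of the two graph vectors is `x₁ ⬝ (A + B) x₂`, which
is `x ⬝ A (A + B)⁻¹ B x` after solving `x₂ = (A + B)⁻¹ B x`, and is also
`x₁ ⬝ B x₁ + x₂ ⬝ A x₂ ≥ 0`.
-/

open Matrix

/-- The standard symplectic form on ℝ²ⁿ = ℝⁿ × ℝⁿ: ω((x,p),(x',p')) = p'·x − p·x'. -/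
def omegaForm {n : ℕ} (u v : (Fin n → ℝ) × (Fin n → ℝ)) : ℝ :=
  v.2 ⬝ᵥ u.1 - u.2 ⬝ᵥ v.1

namespace Matrix

variable {m R : Type*} [Fintype m] [CommRing R]

lemma IsSymm.dotProduct_mulVec_comm {M : Matrix m m R} (hM : M.IsSymm) (v w : m → R) :
    v ⬝ᵥ M *ᵥ w = w ⬝ᵥ M *ᵥ v := by
  rw [← dotProduct_transpose_mulVec, hM.eq]

lemma sub_mulVec_eq_of_graph_decomp {S S₁ S₂ : Matrix m m R} {x x₁ x₂ : m → R}
    (hx : x = x₁ + x₂) (hp : S *ᵥ x = S₁ *ᵥ x₁ + S₂ *ᵥ x₂) :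
    (S₂ - S) *ᵥ x₂ = (S - S₁) *ᵥ x₁ := by
  rw [hx, mulVec_add] at hp
  rw [sub_mulVec, sub_mulVec]
  linear_combination -hp

lemma dotProduct_add_mulVec_eq_parallel_sum [DecidableEq m] {A B : Matrix m m R}
    (hA : A.IsSymm) (hB : B.IsSymm) (hAB_unit : IsUnit (A + B)) {x₁ x₂ : m → R}
    (hAB : A *ᵥ x₂ = B *ᵥ x₁) :
    x₁ ⬝ᵥ (A + B) *ᵥ x₂ = (x₁ + x₂) ⬝ᵥ (A * (A + B)⁻¹ * B) *ᵥ (x₁ + x₂) := by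
  have hx₁ : (A + B) *ᵥ x₁ = A *ᵥ (x₁ + x₂) := by rw [add_mulVec, mulVec_add, hAB]
  have hx₂ : (A + B) *ᵥ x₂ = B *ᵥ (x₁ + x₂) := by rw [add_mulVec, mulVec_add, hAB]
  have hinv : (A + B)⁻¹ *ᵥ ((A + B) *ᵥ x₂) = x₂ := by
    rw [mulVec_mulVec, nonsing_inv_mul _ ((isUnit_iff_isUnit_det _).mp hAB_unit), one_mulVec]
  calc x₁ ⬝ᵥ (A + B) *ᵥ x₂ = x₂ ⬝ᵥ A *ᵥ (x₁ + x₂) := by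
        rw [(hA.add hB).dotProduct_mulVec_comm, hx₁]
    _ = (x₁ + x₂) ⬝ᵥ A *ᵥ ((A + B)⁻¹ *ᵥ (B *ᵥ (x₁ + x₂))) := by
        rw [hA.dotProduct_mulVec_comm, ← hx₂, hinv]
    _ = (x₁ + x₂) ⬝ᵥ (A * (A + B)⁻¹ * B) *ᵥ (x₁ + x₂) := by
        rw [mulVec_mulVec, mulVec_mulVec, Matrix.mul_assoc]

end Matrix

lemma Matrix.PosSemidef.dotProduct_add_mulVec_nonneg {m : Type*} [Fintype m]
    {A B : Matrix m m ℝ} (hA : A.PosSemidef) (hB : B.PosSemidef) {x₁ x₂ : m → ℝ}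
    (hAB : A *ᵥ x₂ = B *ᵥ x₁) :
    0 ≤ x₁ ⬝ᵥ (A + B) *ᵥ x₂ := by
  have hdiag : x₁ ⬝ᵥ A *ᵥ x₂ = x₁ ⬝ᵥ B *ᵥ x₁ := by rw [hAB]
  have hcross : x₁ ⬝ᵥ B *ᵥ x₂ = x₂ ⬝ᵥ A *ᵥ x₂ := by
    rw [(isHermitian_iff_isSymm.mp hB.isHermitian).dotProduct_mulVec_comm, hAB]
  have hB₁ := hB.dotProduct_mulVec_nonneg x₁
  have hA₂ := hA.dotProduct_mulVec_nonneg x₂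
  rw [star_trivial] at hB₁ hA₂
  rw [add_mulVec, dotProduct_add, hdiag, hcross]
  exact add_nonneg hB₁ hA₂

lemma omegaForm_graph {n : ℕ} {S₁ : Matrix (Fin n) (Fin n) ℝ} (hS₁ : S₁.IsSymm)
    (S₂ : Matrix (Fin n) (Fin n) ℝ) (x₁ x₂ : Fin n → ℝ) :
    omegaForm (x₁, S₁ *ᵥ x₁) (x₂, S₂ *ᵥ x₂) = x₁ ⬝ᵥ (S₂ - S₁) *ᵥ x₂ := by
  dsimp only [omegaForm]
  rw [dotProduct_comm, dotProduct_comm (S₁ *ᵥ x₁), hS₁.dotProduct_mulVec_comm x₂, sub_mulVec,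
    dotProduct_sub]

theorem stmt7_general (n : ℕ) (S₁ S₂ S : Matrix (Fin n) (Fin n) ℝ)
    (hS₁ : S₁.IsSymm)
    (hU : (S₂ - S₁).PosDef)
    (h₁ : (S - S₁).PosSemidef) (h₂ : (S₂ - S).PosSemidef)
    (x x₁ x₂ : Fin n → ℝ)
    (hdecomp : ((x, S *ᵥ x) : (Fin n → ℝ) × (Fin n → ℝ))
      = (x₁, S₁ *ᵥ x₁) + (x₂, S₂ *ᵥ x₂)) :
    omegaForm (x₁, S₁ *ᵥ x₁) (x₂, S₂ *ᵥ x₂)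
      = x ⬝ᵥ ((S₂ - S) * (S₂ - S₁)⁻¹ * (S - S₁)) *ᵥ x ∧
    0 ≤ x ⬝ᵥ ((S₂ - S) * (S₂ - S₁)⁻¹ * (S - S₁)) *ᵥ x := by
  have hx : x = x₁ + x₂ := congrArg Prod.fst hdecomp
  have hp : S *ᵥ x = S₁ *ᵥ x₁ + S₂ *ᵥ x₂ := congrArg Prod.snd hdecomp
  have hAB := sub_mulVec_eq_of_graph_decomp hx hp
  have hsplit : S₂ - S₁ = (S₂ - S) + (S - S₁) := (sub_add_sub_cancel _ _ _).symm
  have hω := dotProduct_add_mulVec_eq_parallel_sum (isHermitian_iff_isSymm.mp h₂.isHermitian)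
    (isHermitian_iff_isSymm.mp h₁.isHermitian) (hsplit ▸ hU.isUnit) hAB
  rw [omegaForm_graph hS₁, hx, hsplit, hω]
  exact ⟨rfl, hω ▸ h₂.dotProduct_add_mulVec_nonneg h₁ hAB⟩

theorem stmt7 (n : ℕ) (S₁ S₂ S : Matrix (Fin n) (Fin n) ℝ)
    (hS₁ : S₁.IsSymm) (hS₂ : S₂.IsSymm) (hS : S.IsSymm)
    (hU : (S₂ - S₁).PosDef)
    (h₁ : (S - S₁).PosSemidef) (h₂ : (S₂ - S).PosSemidef)
    (x x₁ x₂ : Fin n → ℝ)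
    (hdecomp : ((x, S *ᵥ x) : (Fin n → ℝ) × (Fin n → ℝ))
      = (x₁, S₁ *ᵥ x₁) + (x₂, S₂ *ᵥ x₂)) :
    omegaForm (x₁, S₁ *ᵥ x₁) (x₂, S₂ *ᵥ x₂)
      = x ⬝ᵥ ((S₂ - S) * (S₂ - S₁)⁻¹ * (S - S₁)) *ᵥ x ∧
    0 ≤ x ⬝ᵥ ((S₂ - S) * (S₂ - S₁)⁻¹ * (S - S₁)) *ᵥ x :=
  stmt7_general n S₁ S₂ S hS₁ hU h₁ h₂ x x₁ x₂ hdecomp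
end

section
/- Let v ∈ ℝ²ⁿ, and let S₁ < S₂ be symmetric matrices with U = S₂ − S₁. If Sg_{𝒮₁,𝒮₂}(v) ≥ 0, then there exists a symmetric matrix S with S₁ ≤ S ≤ S₂ and x ∈ ℝⁿ such that v = (x, Sx). -/
/-!
Write `U = S₂ - S₁` and `w = U x₂`. If `S₁` is symmetric then `Sg(v) = ⟨x₁, U x₂⟩`, so
`d := ⟨x₁ + x₂, w⟩ ≥ ⟨x₂, U x₂⟩ ≥ 0`. The rank-one update `S = S₁ + d⁻¹ w wᵀ` satisfies
`S (x₁ + x₂) = S₁ x₁ + S₁ x₂ + w = S₁ x₁ + S₂ x₂`, and `S₂ - S = U - d⁻¹ w wᵀ` is positive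
semidefinite by Cauchy–Schwarz for `U`: `⟨w, y⟩² ≤ ⟨x₂, U x₂⟩ ⟨y, U y⟩ ≤ d ⟨y, U y⟩`.
-/

open Matrix

namespace Matrix

variable {ι : Type*} {A : Matrix ι ι ℝ}

lemma PosSemidef.isSymm (hA : A.PosSemidef) : A.IsSymm :=
  isHermitian_iff_isSymm.mp hA.isHermitian

variable [Fintype ι]

lemma PosSemidef.dotProduct_mulVec_self_nonneg (hA : A.PosSemidef) (x : ι → ℝ) :
    0 ≤ x ⬝ᵥ A *ᵥ x := by
  simpa only [star_trivial] using hA.dotProduct_mulVec_nonneg x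

lemma PosSemidef.dotProduct_mulVec_sq_le (hA : A.PosSemidef) (x y : ι → ℝ) :
    (x ⬝ᵥ A *ᵥ y) ^ 2 ≤ (x ⬝ᵥ A *ᵥ x) * (y ⬝ᵥ A *ᵥ y) := by
  classical
  have hsymm : LinearMap.IsSymm A.toBilin' :=
    LinearMap.BilinForm.isSymm_iff.mp (isSymm_toBilin'_iff_isSymm.mpr hA.isSymm)
  simpa only [toBilin'_apply'] using A.toBilin'.apply_sq_le_of_symm
    (by simpa only [toBilin'_apply'] using hA.dotProduct_mulVec_self_nonneg) hsymm x y

lemma PosSemidef.mulVec_eq_zero_of_dotProduct_mulVec_self_eq_zero (hA : A.PosSemidef)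
    {x : ι → ℝ} (hx : x ⬝ᵥ A *ᵥ x = 0) : A *ᵥ x = 0 := by
  have h := hA.dotProduct_mulVec_sq_le (A *ᵥ x) x
  rwa [hx, mul_zero, sq_nonpos_iff, dotProduct_self_eq_zero] at h

lemma posSemidef_smul_vecMulVec_self {c : ℝ} (hc : 0 ≤ c) (w : ι → ℝ) :
    (c • vecMulVec w w).PosSemidef :=
  (posSemidef_vecMulVec_self_star w).smul hc

lemma vecMulVec_self_mulVec (w y : ι → ℝ) : vecMulVec w w *ᵥ y = (w ⬝ᵥ y) • w := by
  simp [vecMulVec_mulVec]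

lemma PosSemidef.sub_inv_smul_vecMulVec_mulVec (hA : A.PosSemidef) {x : ι → ℝ} {d : ℝ}
    (hd : x ⬝ᵥ A *ᵥ x ≤ d) : (A - d⁻¹ • vecMulVec (A *ᵥ x) (A *ᵥ x)).PosSemidef := by
  have hd₀ : 0 ≤ d := (hA.dotProduct_mulVec_self_nonneg x).trans hd
  refine posSemidef_iff_dotProduct_mulVec.mpr ⟨hA.isHermitian.sub
    (posSemidef_smul_vecMulVec_self (inv_nonneg.mpr hd₀) _).isHermitian, fun y ↦ ?_⟩
  have hAx : (A *ᵥ x) ⬝ᵥ y = x ⬝ᵥ A *ᵥ y := by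
    rw [dotProduct_mulVec, ← mulVec_transpose, hA.isSymm.eq]
  have hcs : d⁻¹ * (x ⬝ᵥ A *ᵥ y) ^ 2 ≤ y ⬝ᵥ A *ᵥ y :=
    calc d⁻¹ * (x ⬝ᵥ A *ᵥ y) ^ 2 ≤ d⁻¹ * (d * (y ⬝ᵥ A *ᵥ y)) := by
          gcongr
          exact (hA.dotProduct_mulVec_sq_le x y).trans
            (by gcongr; exact hA.dotProduct_mulVec_self_nonneg y)
      _ ≤ y ⬝ᵥ A *ᵥ y := by
          rw [← mul_assoc]
          exact mul_le_of_le_one_left (hA.dotProduct_mulVec_self_nonneg y)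
            (inv_mul_le_one_of_le₀ le_rfl hd₀)
  rw [star_trivial, sub_mulVec, dotProduct_sub, smul_mulVec, dotProduct_smul,
    vecMulVec_self_mulVec, dotProduct_smul, smul_eq_mul, smul_eq_mul,
    dotProduct_comm y (A *ᵥ x), hAx, sub_nonneg, ← sq]
  exact hcs

theorem exists_isSymm_between_mulVec_add_eq {S₁ S₂ : Matrix ι ι ℝ} (hS₁ : S₁.IsSymm)
    (hU : (S₂ - S₁).PosSemidef) {x₁ x₂ : ι → ℝ} (hsg : 0 ≤ x₁ ⬝ᵥ (S₂ - S₁) *ᵥ x₂) :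
    ∃ S : Matrix ι ι ℝ, S.IsSymm ∧ (S - S₁).PosSemidef ∧ (S₂ - S).PosSemidef ∧
      S *ᵥ (x₁ + x₂) = S₁ *ᵥ x₁ + S₂ *ᵥ x₂ := by
  set w := (S₂ - S₁) *ᵥ x₂
  set d := (x₁ + x₂) ⬝ᵥ w
  have hx₂ := hU.dotProduct_mulVec_self_nonneg x₂
  have hd : x₂ ⬝ᵥ (S₂ - S₁) *ᵥ x₂ ≤ d := by
    simp only [d, add_dotProduct]
    linarith
  -- When `d = 0`, `d⁻¹ = 0` makes `S = S₁`; this still works because then `w = 0`.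
  have hw : d⁻¹ • d • w = w := by
    rcases eq_or_ne d 0 with hd₀ | hd₀
    · simp [w, hU.mulVec_eq_zero_of_dotProduct_mulVec_self_eq_zero (le_antisymm (hd₀ ▸ hd) hx₂)]
    · rw [smul_smul, inv_mul_cancel₀ hd₀, one_smul]
  have hP := posSemidef_smul_vecMulVec_self (inv_nonneg.mpr (hx₂.trans hd)) w
  refine ⟨S₁ + d⁻¹ • vecMulVec w w, hS₁.add hP.isSymm, by simpa using hP,
    by simpa [sub_add_eq_sub_sub] using hU.sub_inv_smul_vecMulVec_mulVec hd, ?_⟩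
  rw [add_mulVec, smul_mulVec, vecMulVec_self_mulVec, dotProduct_comm, hw]
  simp only [w, sub_mulVec, mulVec_add]
  abel

end Matrix

theorem stmt9_general (n : ℕ) (S₁ S₂ : Matrix (Fin n) (Fin n) ℝ)
    (hS₁ : S₁.IsSymm) (hU : (S₂ - S₁).PosDef)
    (v : (Fin n → ℝ) × (Fin n → ℝ)) (x₁ x₂ : Fin n → ℝ)
    (hdecomp : v = (x₁, S₁ *ᵥ x₁) + (x₂, S₂ *ᵥ x₂))
    (hsg : 0 ≤ omegaForm (x₁, S₁ *ᵥ x₁) (x₂, S₂ *ᵥ x₂)) :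
    ∃ (S : Matrix (Fin n) (Fin n) ℝ) (x : Fin n → ℝ), S.IsSymm ∧
      (S - S₁).PosSemidef ∧ (S₂ - S).PosSemidef ∧ v = (x, S *ᵥ x) := by
  rw [omegaForm_graph hS₁] at hsg
  obtain ⟨S, hS, hS₁S, hSS₂, hSx⟩ := exists_isSymm_between_mulVec_add_eq hS₁ hU.posSemidef hsg
  exact ⟨S, x₁ + x₂, hS, hS₁S, hSS₂, by rw [hdecomp, hSx, Prod.mk_add_mk]⟩

theorem stmt9 (n : ℕ) (S₁ S₂ : Matrix (Fin n) (Fin n) ℝ)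
    (hS₁ : S₁.IsSymm) (hS₂ : S₂.IsSymm) (hU : (S₂ - S₁).PosDef)
    (v : (Fin n → ℝ) × (Fin n → ℝ)) (x₁ x₂ : Fin n → ℝ)
    (hdecomp : v = (x₁, S₁ *ᵥ x₁) + (x₂, S₂ *ᵥ x₂))
    (hsg : 0 ≤ omegaForm (x₁, S₁ *ᵥ x₁) (x₂, S₂ *ᵥ x₂)) :
    ∃ (S : Matrix (Fin n) (Fin n) ℝ) (x : Fin n → ℝ), S.IsSymm ∧
      (S - S₁).PosSemidef ∧ (S₂ - S).PosSemidef ∧ v = (x, S *ᵥ x) :=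
  stmt9_general n S₁ S₂ hS₁ hU v x₁ x₂ hdecomp hsg
end

section
/- Let S₁ ≤ S₂ be symmetric matrices and A an invertible matrix. Then Φ_A(C(𝒮₁, 𝒮₂)) = C(𝒮₁^A, 𝒮₂^A), where Φ_A(x, y) = (A⁻¹x, Aᵀy), C(𝒮₁, 𝒮₂) = {(h, Sh) : S₁ ≤ S ≤ S₂}, and 𝒮ᵢ^A is the graph Lagrangian of AᵀSᵢA. -/
open Matrix

/-- The cone C(𝒮₁, 𝒮₂) between the graph Lagrangians of S₁ ≤ S₂. -/
def coneBetween {n : ℕ} (S₁ S₂ : Matrix (Fin n) (Fin n) ℝ) :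
    Set ((Fin n → ℝ) × (Fin n → ℝ)) :=
  {v | ∃ S : Matrix (Fin n) (Fin n) ℝ, S.IsSymm ∧ (S - S₁).PosSemidef ∧
    (S₂ - S).PosSemidef ∧ v.2 = S *ᵥ v.1}

lemma conj_psd {n : ℕ} {M : Matrix (Fin n) (Fin n) ℝ} (hM : M.PosSemidef)
    (B : Matrix (Fin n) (Fin n) ℝ) : (Bᵀ * M * B).PosSemidef := by
  simpa [conjTranspose_eq_transpose_of_trivial] using hM.conjTranspose_mul_mul_same B

theorem stmt12 (n : ℕ) (S₁ S₂ A : Matrix (Fin n) (Fin n) ℝ)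
    (hS₁ : S₁.IsSymm) (hS₂ : S₂.IsSymm) (hle : (S₂ - S₁).PosSemidef)
    (hA : IsUnit A.det) :
    (fun p : (Fin n → ℝ) × (Fin n → ℝ) => (A⁻¹ *ᵥ p.1, Aᵀ *ᵥ p.2)) ''
        coneBetween S₁ S₂
      = coneBetween (Aᵀ * S₁ * A) (Aᵀ * S₂ * A) := by
  have hAi : A⁻¹ * A = 1 := nonsing_inv_mul A hA
  have hAi' : A * A⁻¹ = 1 := mul_nonsing_inv A hA
  have hTi : Aᵀ * (Aᵀ)⁻¹ = 1 := mul_nonsing_inv _ (by simpa using hA)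
  have hTi' : (Aᵀ)⁻¹ * Aᵀ = 1 := nonsing_inv_mul _ (by simpa using hA)
  have hconj : ∀ M : Matrix (Fin n) (Fin n) ℝ,
      (Aᵀ)⁻¹ * (Aᵀ * M * A) * A⁻¹ = M := by
    intro M
    calc (Aᵀ)⁻¹ * (Aᵀ * M * A) * A⁻¹ = ((Aᵀ)⁻¹ * Aᵀ) * M * (A * A⁻¹) := by
          simp only [mul_assoc]
      _ = M := by rw [hTi', hAi', one_mul, mul_one]
  ext v
  constructor
  · rintro ⟨⟨x, y⟩, ⟨S, hSsym, h1, h2, hy⟩, rfl⟩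
    refine ⟨Aᵀ * S * A, ?_, ?_, ?_, ?_⟩
    · simp [Matrix.IsSymm, transpose_mul, hSsym.eq, mul_assoc]
    · have h : Aᵀ * S * A - Aᵀ * S₁ * A = Aᵀ * (S - S₁) * A := by
        rw [Matrix.mul_sub, Matrix.sub_mul]
      rw [h]; exact conj_psd h1 A
    · have h : Aᵀ * S₂ * A - Aᵀ * S * A = Aᵀ * (S₂ - S) * A := by
        rw [Matrix.mul_sub, Matrix.sub_mul]
      rw [h]; exact conj_psd h2 A
    · simp only at hy
      simp only [hy, mulVec_mulVec]
      rw [show Aᵀ * S * A * A⁻¹ = Aᵀ * S by rw [mul_assoc, hAi', mul_one]]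
  · rintro ⟨T, hTsym, h1, h2, hT⟩
    refine ⟨(A *ᵥ v.1, (Aᵀ)⁻¹ *ᵥ v.2), ⟨(Aᵀ)⁻¹ * T * A⁻¹, ?_, ?_, ?_, ?_⟩, ?_⟩
    · simp only [Matrix.IsSymm, transpose_mul, transpose_nonsing_inv, transpose_transpose,
        hTsym.eq, mul_assoc]
    · have h : (Aᵀ)⁻¹ * T * A⁻¹ - S₁ = (Aᵀ)⁻¹ * (T - Aᵀ * S₁ * A) * A⁻¹ := by
        rw [Matrix.mul_sub, Matrix.sub_mul, hconj]
      rw [h, ← transpose_nonsing_inv]; exact conj_psd h1 A⁻¹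
    · have h : S₂ - (Aᵀ)⁻¹ * T * A⁻¹ = (Aᵀ)⁻¹ * (Aᵀ * S₂ * A - T) * A⁻¹ := by
        rw [Matrix.mul_sub, Matrix.sub_mul, hconj]
      rw [h, ← transpose_nonsing_inv]; exact conj_psd h2 A⁻¹
    · rw [hT, mulVec_mulVec, mulVec_mulVec, mul_assoc, hAi, mul_one]
    · simp only
      rw [mulVec_mulVec, mulVec_mulVec, hAi, hTi, one_mulVec, one_mulVec]
end

section
/- Let A, B be symmetric n×n matrices with U = B − A positive definite. Suppose f : ℝⁿ → ℝ is B-semi-concave, g : ℝⁿ → ℝ is (−A)-semi-convex (i.e., −g is (−A)-semi-concave), f ≥ g everywhere, and let K = argmin(f − g). Then f and g are differentiable at points of K with df = dg there, and for all x₁, x₂ ∈ K: ‖df(x₂) − df(x₁) − ½(A+B)(x₂−x₁)‖_{U⁻¹} ≤ ½‖x₂−x₁‖_U, where ‖v‖_M = √((Mv)·v). -/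
/-!
At a minimum point `x` of `f - g`, the quadratic lying above `f` and the one lying below `g`
have the same slope `l` there: their difference dominates `f - g - (f x - g x) ≥ 0` and vanishes
at `x`, so its differential at `x` is zero. Hence `f` and `g` are both squeezed between two
quadratics tangent to `y ↦ l ⬝ᵥ (y - x)` and are differentiable at `x` with gradient `l`.

For two minimum points `x₁, x₂` with midpoint `c`, compare `f - g` at `c + v` using the supports
of `f` at `x₂` and of `g` at `x₁`, and at `c - v` the other way round. Summing, with `U = B - A`,
`d = x₂ - x₁` and `p = l₂ - l₁ - ½ (A + B) d`, gives `0 ≤ 2 p ⬝ᵥ v + U v ⬝ᵥ v + ¼ U d ⬝ᵥ d` for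
every `v`, and `v = -U⁻¹ p` turns this into `U⁻¹ p ⬝ᵥ p ≤ ¼ U d ⬝ᵥ d`.
-/

open Matrix

/-- The gradient vector of f : ℝⁿ → ℝ at x, as a vector in ℝⁿ. -/
noncomputable def gradVec {n : ℕ} (f : (Fin n → ℝ) → ℝ) (x : Fin n → ℝ) :
    Fin n → ℝ :=
  fun i => fderiv ℝ f x (Pi.single i 1)

open Filter Topology Asymptotics

section
variable {ι : Type*} [Fintype ι]

noncomputable def dotProductCLM (l : ι → ℝ) : (ι → ℝ) →L[ℝ] ℝ :=
  LinearMap.toContinuousLinearMap (dotProductBilin ℝ ℝ l)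

@[simp]
lemma dotProductCLM_apply (l v : ι → ℝ) : dotProductCLM l v = l ⬝ᵥ v := rfl

lemma isLittleO_mulVec_dotProduct_self (M : Matrix ι ι ℝ) :
    (fun h : ι → ℝ => (M *ᵥ h) ⬝ᵥ h) =o[𝓝 0] fun h => h := by
  have hbig : (fun h : ι → ℝ => (M *ᵥ h) ⬝ᵥ h) =O[𝓝 0] fun h => ‖h‖ ^ 2 := by
    have hbil := ((dotProductBilin ℝ ℝ).comp (mulVecLin M)).toContinuousBilinearMap
      |>.isBoundedBilinearMap
    simpa [sq] using hbil.isBigO_comp (g := fun h => h) (h := fun h => h) (l := 𝓝 0)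
  exact hbig.trans_isLittleO (isLittleO_norm_pow_id one_lt_two)

theorem hasFDerivAt_of_isLittleO_bounds {E : Type*} [NormedAddCommGroup E] [NormedSpace ℝ E]
    {F a b : E → ℝ} {L : E →L[ℝ] ℝ} {x : E}
    (ha : a =o[𝓝 0] fun h => h) (hb : b =o[𝓝 0] fun h => h)
    (hlo : ∀ h, a h ≤ F (x + h) - F x - L h) (hhi : ∀ h, F (x + h) - F x - L h ≤ b h) :
    HasFDerivAt F L x := by
  rw [hasFDerivAt_iff_isLittleO_nhds_zero]
  refine IsBigO.trans_isLittleO (isBigO_of_le _ fun h => ?_) (ha.norm_left.add hb.norm_left)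
  simp only [Real.norm_eq_abs]
  rw [abs_of_nonneg (by positivity : 0 ≤ |a h| + |b h|), abs_le]
  constructor <;> linarith [hlo h, hhi h, neg_abs_le (a h), le_abs_self (b h), abs_nonneg (a h),
    abs_nonneg (b h)]

def HasUpperQuadSupport (M : Matrix ι ι ℝ) (f : (ι → ℝ) → ℝ) (x l : ι → ℝ) : Prop :=
  ∀ y, f y - f x - l ⬝ᵥ (y - x) ≤ (1/2) * (M *ᵥ (y - x)) ⬝ᵥ (y - x)

def HasLowerQuadSupport (M : Matrix ι ι ℝ) (f : (ι → ℝ) → ℝ) (x l : ι → ℝ) : Prop :=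
  ∀ y, (1/2) * (M *ᵥ (y - x)) ⬝ᵥ (y - x) ≤ f y - f x - l ⬝ᵥ (y - x)

def IsSemiconcave (M : Matrix ι ι ℝ) (f : (ι → ℝ) → ℝ) : Prop :=
  ∀ x, ∃ l, HasUpperQuadSupport M f x l

variable {A B M : Matrix ι ι ℝ} {f g : (ι → ℝ) → ℝ} {x l : ι → ℝ}

lemma HasUpperQuadSupport.neg (h : HasUpperQuadSupport (-M) (-f) x l) :
    HasLowerQuadSupport M f x (-l) := fun y => by
  have := h y
  simp only [Pi.neg_apply, neg_mulVec, neg_dotProduct] at this ⊢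
  linarith

theorem HasLowerQuadSupport.hasFDerivAt (hlo : HasLowerQuadSupport A f x l)
    (hup : HasUpperQuadSupport B f x l) : HasFDerivAt f (dotProductCLM l) x :=
  hasFDerivAt_of_isLittleO_bounds ((isLittleO_mulVec_dotProduct_self A).const_mul_left (1/2))
    ((isLittleO_mulVec_dotProduct_self B).const_mul_left (1/2))
    (fun h => by simpa using hlo (x + h)) (fun h => by simpa using hup (x + h))

theorem eq_zero_of_forall_dotProduct_add_nonneg {v : ι → ℝ}
    (h : ∀ w, 0 ≤ v ⬝ᵥ w + (1/2) * (M *ᵥ w) ⬝ᵥ w) : v = 0 := by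
  set φ : (ι → ℝ) → ℝ := fun w => v ⬝ᵥ w + (1/2) * (M *ᵥ w) ⬝ᵥ w
  have hφ : HasFDerivAt φ (dotProductCLM v) 0 :=
    HasLowerQuadSupport.hasFDerivAt (A := M) (B := M) (fun y => by simp [φ]) (fun y => by simp [φ])
  have hmin : IsLocalMin φ 0 := Eventually.of_forall fun w => by simpa [φ] using h w
  have hzero := hmin.hasFDerivAt_eq_zero hφ
  classical
  funext i
  simpa using DFunLike.congr_fun hzero (Pi.single i 1)

theorem exists_common_slope (hf : IsSemiconcave B f) (hg : IsSemiconcave (-A) (-g))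
    (hx : ∀ y, f x - g x ≤ f y - g y) :
    ∃ l, HasUpperQuadSupport B f x l ∧ HasLowerQuadSupport A g x l := by
  obtain ⟨l, hl⟩ := hf x
  obtain ⟨m, hm⟩ := hg x
  have hm' := hm.neg
  have hlm : l - -m = 0 := eq_zero_of_forall_dotProduct_add_nonneg (M := B - A) fun w => by
    have h1 := hl (x + w)
    have h2 := hm' (x + w)
    have h3 := hx (x + w)
    simp only [add_sub_cancel_left, sub_dotProduct, sub_mulVec] at h1 h2 h3 ⊢
    linarith
  rw [sub_eq_zero] at hlm
  exact ⟨l, hl, hlm ▸ hm'⟩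

theorem hasFDerivAt_of_common_slope (hf : HasUpperQuadSupport B f x l)
    (hg : HasLowerQuadSupport A g x l) (hx : ∀ y, f x - g x ≤ f y - g y) :
    HasFDerivAt f (dotProductCLM l) x ∧ HasFDerivAt g (dotProductCLM l) x :=
  ⟨HasLowerQuadSupport.hasFDerivAt (A := A) (fun y => by linarith [hg y, hx y]) hf,
    hg.hasFDerivAt (B := B) fun y => by linarith [hf y, hx y]⟩

theorem inv_mulVec_dotProduct_le_of_forall_nonneg [DecidableEq ι] {U : Matrix ι ι ℝ}
    (hU : IsUnit U.det) {p : ι → ℝ} {c : ℝ} (h : ∀ v, 0 ≤ 2 * p ⬝ᵥ v + (U *ᵥ v) ⬝ᵥ v + c) :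
    (U⁻¹ *ᵥ p) ⬝ᵥ p ≤ c := by
  have hv := h (-(U⁻¹ *ᵥ p))
  rw [mulVec_neg, mulVec_mulVec, mul_nonsing_inv _ hU, one_mulVec, dotProduct_neg,
    neg_dotProduct, dotProduct_neg, neg_neg, dotProduct_comm p] at hv
  linarith

lemma Matrix.IsSymm.mulVec_dotProduct_comm {M : Matrix ι ι ℝ} (hM : M.IsSymm) (u v : ι → ℝ) :
    (M *ᵥ u) ⬝ᵥ v = (M *ᵥ v) ⬝ᵥ u := by
  rw [dotProduct_comm, dotProduct_mulVec, ← mulVec_transpose, hM.eq]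

theorem slope_gap_quadratic_nonneg (hAB : (A + B).IsSymm) {x₁ x₂ l₁ l₂ : ι → ℝ}
    (hf₁ : HasUpperQuadSupport B f x₁ l₁) (hf₂ : HasUpperQuadSupport B f x₂ l₂)
    (hg₁ : HasLowerQuadSupport A g x₁ l₁) (hg₂ : HasLowerQuadSupport A g x₂ l₂)
    (hx₁ : ∀ y, f x₁ - g x₁ ≤ f y - g y) (hx₂ : ∀ y, f x₂ - g x₂ ≤ f y - g y) (v : ι → ℝ) :
    0 ≤ 2 * (l₂ - l₁ - (1/2 : ℝ) • ((A + B) *ᵥ (x₂ - x₁))) ⬝ᵥ v + ((B - A) *ᵥ v) ⬝ᵥ v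
      + (1/4) * ((B - A) *ᵥ (x₂ - x₁)) ⬝ᵥ (x₂ - x₁) := by
  obtain ⟨c, e, rfl, rfl⟩ : ∃ c e, x₁ = c - e ∧ x₂ = c + e :=
    ⟨(1/2 : ℝ) • (x₁ + x₂), (1/2 : ℝ) • (x₂ - x₁), by module, by module⟩
  have hf₂ := hf₂ (c + v)
  have hg₁ := hg₁ (c + v)
  have hx₁ := hx₁ (c + v)
  have hf₁ := hf₁ (c - v)
  have hg₂ := hg₂ (c - v)
  have hx₂ := hx₂ (c - v)
  have hsymm := hAB.mulVec_dotProduct_comm v e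
  rw [show c + e - (c - e) = (2 : ℝ) • e by module]
  rw [show c + v - (c + e) = v - e by abel] at hf₂
  rw [show c + v - (c - e) = v + e by abel] at hg₁
  rw [show c - v - (c - e) = -(v - e) by abel] at hf₁
  rw [show c - v - (c + e) = -(v + e) by abel] at hg₂
  simp only [mulVec_add, mulVec_sub, mulVec_neg, mulVec_smul, add_mulVec, sub_mulVec,
    add_dotProduct, sub_dotProduct, dotProduct_add, dotProduct_sub, neg_dotProduct,
    dotProduct_neg, smul_dotProduct, dotProduct_smul, smul_eq_mul] at hf₁ hf₂ hg₁ hg₂ hsymm ⊢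
  linarith

end

lemma gradVec_eq_of_hasFDerivAt {n : ℕ} {f : (Fin n → ℝ) → ℝ} {x l : Fin n → ℝ}
    (h : HasFDerivAt f (dotProductCLM l) x) : gradVec f x = l := by
  funext i
  simp [gradVec, h.fderiv]

theorem stmt16_general (n : ℕ) (A B : Matrix (Fin n) (Fin n) ℝ)
    (hA : A.IsSymm) (hU : (B - A).PosDef)
    (f g : (Fin n → ℝ) → ℝ)
    (hf : ∀ x : Fin n → ℝ, ∃ l : Fin n → ℝ, ∀ y : Fin n → ℝ,
      f y - f x - l ⬝ᵥ (y - x) ≤ (1/2) * (B *ᵥ (y - x)) ⬝ᵥ (y - x))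
    (hg : ∀ x : Fin n → ℝ, ∃ l : Fin n → ℝ, ∀ y : Fin n → ℝ,
      (-g) y - (-g) x - l ⬝ᵥ (y - x) ≤ (1/2) * ((-A) *ᵥ (y - x)) ⬝ᵥ (y - x))
    (K : Set (Fin n → ℝ)) (hK : K = {x | ∀ y, f x - g x ≤ f y - g y}) :
    (∀ x ∈ K, DifferentiableAt ℝ f x ∧ DifferentiableAt ℝ g x ∧
      fderiv ℝ f x = fderiv ℝ g x) ∧
    ∀ x₁ ∈ K, ∀ x₂ ∈ K,
      Real.sqrt (((B - A)⁻¹ *ᵥ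
          (gradVec f x₂ - gradVec f x₁ - (1/2 : ℝ) • ((A + B) *ᵥ (x₂ - x₁)))) ⬝ᵥ
          (gradVec f x₂ - gradVec f x₁ - (1/2 : ℝ) • ((A + B) *ᵥ (x₂ - x₁))))
        ≤ (1/2) * Real.sqrt (((B - A) *ᵥ (x₂ - x₁)) ⬝ᵥ (x₂ - x₁)) := by
  subst hK
  choose! l hfl hgl using fun x (hx : x ∈ {x | ∀ y, f x - g x ≤ f y - g y}) =>
    exists_common_slope hf hg hx
  have hderiv := fun x hx => hasFDerivAt_of_common_slope (hfl x hx) (hgl x hx) hx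
  refine ⟨fun x hx => ?_, fun x₁ hx₁ x₂ hx₂ => ?_⟩
  · obtain ⟨hfd, hgd⟩ := hderiv x hx
    exact ⟨hfd.differentiableAt, hgd.differentiableAt, hfd.fderiv.trans hgd.fderiv.symm⟩
  rw [gradVec_eq_of_hasFDerivAt (hderiv x₁ hx₁).1, gradVec_eq_of_hasFDerivAt (hderiv x₂ hx₂).1]
  have hAB : (A + B).IsSymm := by
    rw [show A + B = A + A + (B - A) by abel]
    exact (hA.add hA).add (isHermitian_iff_isSymm.mp hU.isHermitian)
  have hle := inv_mulVec_dotProduct_le_of_forall_nonneg ((isUnit_iff_isUnit_det _).mp hU.isUnit)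
    (slope_gap_quadratic_nonneg hAB (hfl x₁ hx₁) (hfl x₂ hx₂) (hgl x₁ hx₁) (hgl x₂ hx₂) hx₁ hx₂)
  have hnonneg := hU.posSemidef.dotProduct_mulVec_nonneg (x₂ - x₁)
  rw [star_trivial, dotProduct_comm] at hnonneg
  rw [Real.sqrt_le_iff, mul_pow, Real.sq_sqrt hnonneg]
  exact ⟨by positivity, by linarith⟩

theorem stmt16 (n : ℕ) (A B : Matrix (Fin n) (Fin n) ℝ)
    (hA : A.IsSymm) (hB : B.IsSymm) (hU : (B - A).PosDef)
    (f g : (Fin n → ℝ) → ℝ)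
    (hf : ∀ x : Fin n → ℝ, ∃ l : Fin n → ℝ, ∀ y : Fin n → ℝ,
      f y - f x - l ⬝ᵥ (y - x) ≤ (1/2) * (B *ᵥ (y - x)) ⬝ᵥ (y - x))
    (hg : ∀ x : Fin n → ℝ, ∃ l : Fin n → ℝ, ∀ y : Fin n → ℝ,
      (-g) y - (-g) x - l ⬝ᵥ (y - x) ≤ (1/2) * ((-A) *ᵥ (y - x)) ⬝ᵥ (y - x))
    (hfg : ∀ x, g x ≤ f x)
    (K : Set (Fin n → ℝ)) (hK : K = {x | ∀ y, f x - g x ≤ f y - g y}) :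
    (∀ x ∈ K, DifferentiableAt ℝ f x ∧ DifferentiableAt ℝ g x ∧
      fderiv ℝ f x = fderiv ℝ g x) ∧
    ∀ x₁ ∈ K, ∀ x₂ ∈ K,
      Real.sqrt (((B - A)⁻¹ *ᵥ
          (gradVec f x₂ - gradVec f x₁ - (1/2 : ℝ) • ((A + B) *ᵥ (x₂ - x₁)))) ⬝ᵥ
          (gradVec f x₂ - gradVec f x₁ - (1/2 : ℝ) • ((A + B) *ᵥ (x₂ - x₁))))
        ≤ (1/2) * Real.sqrt (((B - A) *ᵥ (x₂ - x₁)) ⬝ᵥ (x₂ - x₁)) :=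
  stmt16_general n A B hA hU f g hf hg K hK
end

section
/- Let C > 0 and suppose f, −g : ℝⁿ → ℝ are both C-semi-concave with f ≥ g, and let K = argmin(f − g). Then f is differentiable at each point of K, and there is a constant C' > 0 such that ‖df(x₂) − df(x₁)‖ ≤ C'‖x₂ − x₁‖ for all x₁, x₂ ∈ K; i.e., x ↦ df(x) is Lipschitz on K. -/
open Matrix

/-!
At a minimum point `x` of `f - g`, the semiconcavity of `f` bounds `f (x + h) - f x` above by
`L h + C/2 ‖h‖²`, while `f (x + h) - f x ≥ g (x + h) - g x` and the semiconcavity of `-g` bound it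
below by `L' h - C/2 ‖h‖²`. Comparing the two bounds along small multiples of `h` forces `L = L'`,
so `f` is squeezed between two quadratics touching at `x`: it is differentiable there, with
`|f y - f x - Df(x) (y - x)| ≤ C/2 ‖y - x‖²`. Adding these Taylor bounds at `x₁, x₂ ∈ K`,
evaluated at `x₂` and at a point `x₂ + h` with `‖h‖ = ‖x₂ - x₁‖`, gives
`‖Df(x₂) - Df(x₁)‖ ≤ 3C ‖x₂ - x₁‖`. On `ℝⁿ`, whose norm in Mathlib is the sup norm, passing to the
Euclidean quantities of the statement costs a factor `n`.
-/

open Filter Topology Asymptotics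

def SemiconcaveWith {E : Type*} [NormedAddCommGroup E] [NormedSpace ℝ E] (C : ℝ) (f : E → ℝ) :
    Prop :=
  ∀ x, ∃ L : E →L[ℝ] ℝ, ∀ y, f y - f x - L (y - x) ≤ C / 2 * ‖y - x‖ ^ 2

section NormedSpace

variable {E : Type*} [NormedAddCommGroup E] [NormedSpace ℝ E]

theorem ContinuousLinearMap.eq_zero_of_le_mul_norm_sq {φ : E →L[ℝ] ℝ} {C : ℝ}
    (h : ∀ v, φ v ≤ C * ‖v‖ ^ 2) : φ = 0 := by
  have nonpos : ∀ v, φ v ≤ 0 := by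
    intro v
    have hlim : Tendsto (fun t : ℝ => C * t * ‖v‖ ^ 2) (𝓝[>] 0) (𝓝 0) := by
      refine tendsto_nhdsWithin_of_tendsto_nhds ?_
      exact (by fun_prop : Continuous fun t : ℝ => C * t * ‖v‖ ^ 2).tendsto' 0 0 (by simp)
    refine ge_of_tendsto hlim (eventually_nhdsWithin_of_forall fun t (ht : 0 < t) => ?_)
    have hscaled := h (t • v)
    rw [map_smul, smul_eq_mul, norm_smul, Real.norm_of_nonneg ht.le] at hscaled
    exact le_of_mul_le_mul_left (by linarith) ht
  ext v
  exact le_antisymm (nonpos v) (by simpa using nonpos (-v))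

theorem ContinuousLinearMap.opNorm_le_of_sphere {φ : E →L[ℝ] ℝ} {r M : ℝ} (hr : 0 < r)
    (hM : 0 ≤ M) (h : ∀ v, ‖v‖ = r → φ v ≤ M * r) : ‖φ‖ ≤ M := by
  refine φ.opNorm_le_bound hM fun v => ?_
  rcases eq_or_ne v 0 with rfl | hv
  · simp
  have hv' : 0 < ‖v‖ := norm_pos_iff.mpr hv
  set w := (r / ‖v‖) • v with hw
  have hw_norm : ‖w‖ = r := by rw [norm_smul, Real.norm_of_nonneg (by positivity)]; field_simp
  have hφw : |φ w| ≤ M * r :=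
    abs_le.mpr ⟨neg_le.mp (by simpa using h (-w) (by rwa [norm_neg])), h w hw_norm⟩
  calc ‖φ v‖ = ‖v‖ / r * |φ w| := by
        rw [hw, map_smul, smul_eq_mul, abs_mul, abs_of_pos (by positivity), Real.norm_eq_abs]
        field_simp
    _ ≤ ‖v‖ / r * (M * r) := by gcongr
    _ = M * ‖v‖ := by field_simp

theorem hasFDerivAt_of_abs_sub_le_mul_norm_sq {f : E → ℝ} {L : E →L[ℝ] ℝ} {x : E} {M : ℝ}
    (h : ∀ y, |f y - f x - L (y - x)| ≤ M * ‖y - x‖ ^ 2) : HasFDerivAt f L x := by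
  refine .of_isLittleO ?_
  have hbig : (fun y => f y - f x - L (y - x)) =O[𝓝 x] fun y => ‖y - x‖ ^ 2 :=
    .of_bound M (.of_forall fun y => by simpa using h y)
  exact hbig.trans_isLittleO (isLittleO_pow_sub_sub x one_lt_two)

theorem norm_sub_le_of_abs_sub_le_mul_norm_sq {f : E → ℝ} {L₁ L₂ : E →L[ℝ] ℝ} {x₁ x₂ : E}
    {C : ℝ} (hC : 0 ≤ C)
    (h₁ : ∀ y, |f y - f x₁ - L₁ (y - x₁)| ≤ C / 2 * ‖y - x₁‖ ^ 2)
    (h₂ : ∀ y, |f y - f x₂ - L₂ (y - x₂)| ≤ C / 2 * ‖y - x₂‖ ^ 2) :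
    ‖L₂ - L₁‖ ≤ 3 * C * ‖x₂ - x₁‖ := by
  set d := x₂ - x₁
  have key : ∀ v, (L₂ - L₁) v ≤ C * (‖d‖ ^ 2 + ‖d‖ * ‖v‖ + ‖v‖ ^ 2) := by
    intro v
    have e₁ : x₂ + v - x₁ = d + v := add_sub_right_comm x₂ v x₁
    have e₂ : x₂ + v - x₂ = v := add_sub_cancel_left x₂ v
    have far := (abs_le.mp (h₁ (x₂ + v))).2
    have near := (abs_le.mp (h₂ (x₂ + v))).1
    have base := (abs_le.mp (h₁ x₂)).1
    rw [e₁, map_add] at far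
    rw [e₂] at near
    have tri : ‖d + v‖ ^ 2 ≤ (‖d‖ + ‖v‖) ^ 2 := by gcongr; exact norm_add_le d v
    show L₂ v - L₁ v ≤ _
    nlinarith
  rcases eq_or_ne d 0 with hd | hd
  · have : L₂ - L₁ = 0 := ContinuousLinearMap.eq_zero_of_le_mul_norm_sq (C := C) fun v => by
      simpa [hd] using key v
    rw [this, norm_zero]
    positivity
  refine ContinuousLinearMap.opNorm_le_of_sphere (norm_pos_iff.mpr hd) (by positivity)
    fun v hv => ?_
  have bound := key v
  rw [hv] at bound
  linarith

namespace SemiconcaveWith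

variable {f g : E → ℝ} {C : ℝ} {x : E}

theorem exists_abs_sub_le (hf : SemiconcaveWith C f) (hg : SemiconcaveWith C (-g))
    (hx : ∀ y, f x - g x ≤ f y - g y) :
    ∃ L : E →L[ℝ] ℝ, ∀ y, |f y - f x - L (y - x)| ≤ C / 2 * ‖y - x‖ ^ 2 := by
  obtain ⟨Lf, hLf⟩ := hf x
  obtain ⟨Lg, hLg⟩ := hg x
  have lower : ∀ y, -(C / 2 * ‖y - x‖ ^ 2) ≤ f y - f x + Lg (y - x) := fun y => by
    have concave_neg_g := hLg y
    simp only [Pi.neg_apply] at concave_neg_g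
    linarith [hx y]
  have slopes : -(Lf + Lg) = 0 := ContinuousLinearMap.eq_zero_of_le_mul_norm_sq fun v => by
    have upper_v := hLf (x + v)
    have lower_v := lower (x + v)
    rw [add_sub_cancel_left] at upper_v lower_v
    show -(Lf v + Lg v) ≤ C * ‖v‖ ^ 2
    linarith
  have hLg_eq : Lg = -Lf := eq_neg_of_add_eq_zero_right (neg_eq_zero.mp slopes)
  refine ⟨Lf, fun y => abs_le.mpr ⟨?_, hLf y⟩⟩
  simpa [hLg_eq, sub_eq_add_neg] using lower y

theorem differentiableAt (hf : SemiconcaveWith C f) (hg : SemiconcaveWith C (-g))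
    (hx : ∀ y, f x - g x ≤ f y - g y) : DifferentiableAt ℝ f x :=
  let ⟨_, hL⟩ := hf.exists_abs_sub_le hg hx
  (hasFDerivAt_of_abs_sub_le_mul_norm_sq hL).differentiableAt

theorem abs_sub_fderiv_le (hf : SemiconcaveWith C f) (hg : SemiconcaveWith C (-g))
    (hx : ∀ y, f x - g x ≤ f y - g y) (y : E) :
    |f y - f x - fderiv ℝ f x (y - x)| ≤ C / 2 * ‖y - x‖ ^ 2 := by
  obtain ⟨L, hL⟩ := hf.exists_abs_sub_le hg hx
  rw [(hasFDerivAt_of_abs_sub_le_mul_norm_sq hL).fderiv]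
  exact hL y

theorem norm_fderiv_sub_le (hC : 0 ≤ C) (hf : SemiconcaveWith C f) (hg : SemiconcaveWith C (-g))
    {x₁ x₂ : E} (hx₁ : ∀ y, f x₁ - g x₁ ≤ f y - g y) (hx₂ : ∀ y, f x₂ - g x₂ ≤ f y - g y) :
    ‖fderiv ℝ f x₂ - fderiv ℝ f x₁‖ ≤ 3 * C * ‖x₂ - x₁‖ :=
  norm_sub_le_of_abs_sub_le_mul_norm_sq hC (hf.abs_sub_fderiv_le hg hx₁)
    (hf.abs_sub_fderiv_le hg hx₂)

end SemiconcaveWith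

end NormedSpace

section EuclideanCoordinates

variable {ι : Type*} [Fintype ι]

theorem dotProduct_self_le_card_mul_norm_sq (v : ι → ℝ) :
    v ⬝ᵥ v ≤ Fintype.card ι * ‖v‖ ^ 2 := by
  calc v ⬝ᵥ v = ∑ i, ‖v i‖ ^ 2 := by simp [dotProduct, sq]
    _ ≤ ∑ _i : ι, ‖v‖ ^ 2 := Finset.sum_le_sum fun i _ => by gcongr; exact norm_le_pi_norm v i
    _ = Fintype.card ι * ‖v‖ ^ 2 := by simp

theorem norm_le_sqrt_dotProduct_self (v : ι → ℝ) : ‖v‖ ≤ √(v ⬝ᵥ v) := by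
  refine (pi_norm_le_iff_of_nonneg (Real.sqrt_nonneg _)).mpr fun i => ?_
  rw [Real.norm_eq_abs]
  refine Real.abs_le_sqrt ?_
  calc v i ^ 2 = v i * v i := sq _
    _ ≤ v ⬝ᵥ v := Finset.single_le_sum (f := fun j => v j * v j) (fun j _ => mul_self_nonneg _)
        (Finset.mem_univ i)

theorem sqrt_dotProduct_self_le_opNorm [DecidableEq ι] (φ : (ι → ℝ) →L[ℝ] ℝ) :
    √((fun i => φ (Pi.single i 1)) ⬝ᵥ (fun i => φ (Pi.single i 1))) ≤ ‖φ‖ := by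
  set v : ι → ℝ := fun i => φ (Pi.single i 1)
  have hφv : φ v = v ⬝ᵥ v := by
    conv_lhs => rw [pi_eq_sum_univ' v]
    simp [map_sum, dotProduct, v]
  have hle : v ⬝ᵥ v ≤ ‖φ‖ * √(v ⬝ᵥ v) := by
    calc v ⬝ᵥ v = φ v := hφv.symm
      _ ≤ ‖φ‖ * ‖v‖ := (le_abs_self _).trans (φ.le_opNorm v)
      _ ≤ ‖φ‖ * √(v ⬝ᵥ v) := by gcongr; exact norm_le_sqrt_dotProduct_self v
  have hsq : √(v ⬝ᵥ v) * √(v ⬝ᵥ v) = v ⬝ᵥ v :=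
    Real.mul_self_sqrt (Finset.sum_nonneg fun i _ => mul_self_nonneg (v i))
  nlinarith [Real.sqrt_nonneg (v ⬝ᵥ v), norm_nonneg φ]

theorem semiconcaveWith_of_dotProduct {f : (ι → ℝ) → ℝ} {C : ℝ} (hC : 0 ≤ C)
    (hf : ∀ x, ∃ l : ι → ℝ, ∀ y, f y - f x - l ⬝ᵥ (y - x) ≤ 1 / 2 * C * ((y - x) ⬝ᵥ (y - x))) :
    SemiconcaveWith (Fintype.card ι * C) f := by
  intro x
  obtain ⟨l, hl⟩ := hf x
  refine ⟨LinearMap.toContinuousLinearMap (dotProductBilin ℝ ℝ l), fun y => ?_⟩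
  have := dotProduct_self_le_card_mul_norm_sq (y - x)
  simp only [LinearMap.coe_toContinuousLinearMap', dotProductBilin_apply_apply]
  nlinarith [hl y]

end EuclideanCoordinates

theorem stmt17_general (n : ℕ) (C : ℝ) (hC : 0 < C) (f g : (Fin n → ℝ) → ℝ)
    (hf : ∀ x : Fin n → ℝ, ∃ l : Fin n → ℝ, ∀ y : Fin n → ℝ,
      f y - f x - l ⬝ᵥ (y - x) ≤ (1/2) * C * ((y - x) ⬝ᵥ (y - x)))
    (hg : ∀ x : Fin n → ℝ, ∃ l : Fin n → ℝ, ∀ y : Fin n → ℝ,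
      (-g) y - (-g) x - l ⬝ᵥ (y - x) ≤ (1/2) * C * ((y - x) ⬝ᵥ (y - x)))
    (K : Set (Fin n → ℝ)) (hK : K = {x | ∀ y, f x - g x ≤ f y - g y}) :
    (∀ x ∈ K, DifferentiableAt ℝ f x) ∧
    ∃ C' > 0, ∀ x₁ ∈ K, ∀ x₂ ∈ K,
      Real.sqrt ((gradVec f x₂ - gradVec f x₁) ⬝ᵥ (gradVec f x₂ - gradVec f x₁))
        ≤ C' * Real.sqrt ((x₂ - x₁) ⬝ᵥ (x₂ - x₁)) := by
  have hf' := semiconcaveWith_of_dotProduct hC.le hf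
  have hg' := semiconcaveWith_of_dotProduct hC.le hg
  rw [Fintype.card_fin] at hf' hg'
  subst hK
  refine ⟨fun x hx => hf'.differentiableAt hg' hx, 3 * ((n + 1) * C), by positivity,
    fun x₁ hx₁ x₂ hx₂ => ?_⟩
  calc √((gradVec f x₂ - gradVec f x₁) ⬝ᵥ (gradVec f x₂ - gradVec f x₁))
      ≤ ‖fderiv ℝ f x₂ - fderiv ℝ f x₁‖ :=
        sqrt_dotProduct_self_le_opNorm (fderiv ℝ f x₂ - fderiv ℝ f x₁)
    _ ≤ 3 * (n * C) * ‖x₂ - x₁‖ := hf'.norm_fderiv_sub_le (by positivity) hg' hx₁ hx₂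
    _ ≤ 3 * ((n + 1) * C) * √((x₂ - x₁) ⬝ᵥ (x₂ - x₁)) := by
      gcongr
      · linarith
      · exact norm_le_sqrt_dotProduct_self _

theorem stmt17 (n : ℕ) (C : ℝ) (hC : 0 < C) (f g : (Fin n → ℝ) → ℝ)
    (hf : ∀ x : Fin n → ℝ, ∃ l : Fin n → ℝ, ∀ y : Fin n → ℝ,
      f y - f x - l ⬝ᵥ (y - x) ≤ (1/2) * C * ((y - x) ⬝ᵥ (y - x)))
    (hg : ∀ x : Fin n → ℝ, ∃ l : Fin n → ℝ, ∀ y : Fin n → ℝ,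
      (-g) y - (-g) x - l ⬝ᵥ (y - x) ≤ (1/2) * C * ((y - x) ⬝ᵥ (y - x)))
    (hfg : ∀ x, g x ≤ f x)
    (K : Set (Fin n → ℝ)) (hK : K = {x | ∀ y, f x - g x ≤ f y - g y}) :
    (∀ x ∈ K, DifferentiableAt ℝ f x) ∧
    ∃ C' > 0, ∀ x₁ ∈ K, ∀ x₂ ∈ K,
      Real.sqrt ((gradVec f x₂ - gradVec f x₁) ⬝ᵥ (gradVec f x₂ - gradVec f x₁))
        ≤ C' * Real.sqrt ((x₂ - x₁) ⬝ᵥ (x₂ - x₁)) :=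
  stmt17_general n C hC f g hf hg K hK
end

section
/- Let A, B be symmetric matrices with U = B − A positive definite, f B-semi-concave and g (−A)-semi-convex on ℝⁿ with f ≥ g, K = argmin(f−g), and Ĩ = {(x, df(x)) : x ∈ K} ⊂ ℝⁿ × ℝⁿ. Then for every z ∈ Ĩ, the paratingent cone 𝒫_z(Ĩ) — the set of all limits lim tₙ(zₙ − wₙ) with tₙ > 0, zₙ, wₙ ∈ Ĩ, zₙ, wₙ → z — is contained in the cone C(𝒮_A, 𝒮_B) = {(h, Sh) : S symmetric, A ≤ S ≤ B, h ∈ ℝⁿ}. -/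
open Matrix Filter Topology

/-- The paratingent cone of a set S at z: all limits of tₙ(zₙ − wₙ) with
tₙ > 0, zₙ, wₙ ∈ S, zₙ, wₙ → z. -/
def paratingent {E : Type*} [NormedAddCommGroup E] [NormedSpace ℝ E]
    (S : Set E) (z : E) : Set E :=
  {v | ∃ (t : ℕ → ℝ) (zs ws : ℕ → E),
    (∀ m, 0 < t m ∧ zs m ∈ S ∧ ws m ∈ S) ∧
    Tendsto zs atTop (𝓝 z) ∧ Tendsto ws atTop (𝓝 z) ∧
    Tendsto (fun m => t m • (zs m - ws m)) atTop (𝓝 v)}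


/-! At a minimizer `x` of `f - g`, `f` lies below the paraboloid of `B` and, since `f - g` is
minimal there, above the paraboloid of `A` coming from `g`. Both touch `f` at `x`, so their
slopes agree: `f` is differentiable at `x` and `½ A ≤ f(x + w) - f x - df(x) w ≤ ½ B`.
Comparing these expansions at two points of `K` shows that every difference `(h, k)` of points
of `Ĩ` satisfies `A s·s + 2 k·s + k·h ≤ B (s + h)·(s + h)` for all `s`; this condition is
invariant under scaling and closed, so it holds on the paratingent cone. With `r = B h - k` and
`c = r·h` it says `(r·w)² ≤ c (B - A) w·w`, hence `S = B - c⁻¹ r rᵀ` lies between `A` and `B`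
and maps `h` to `k`. -/

open Asymptotics

section

variable {ι : Type*} [Fintype ι]

theorem sq_le_mul_of_forall_two_mul_le {a q c : ℝ} (h : ∀ t : ℝ, 2 * t * a ≤ t ^ 2 * q + c) :
    a ^ 2 ≤ c * q := by
  have := discrim_le_zero (a := q) (b := -2 * a) (c := c) fun t => by nlinarith [h t]
  rw [discrim] at this
  nlinarith

theorem quadForm_smul (M : Matrix ι ι ℝ) (c : ℝ) (v : ι → ℝ) :
    (M *ᵥ (c • v)) ⬝ᵥ (c • v) = c ^ 2 * ((M *ᵥ v) ⬝ᵥ v) := by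
  rw [mulVec_smul, smul_dotProduct, dotProduct_smul, smul_eq_mul, smul_eq_mul]
  ring

theorem sq_dotProduct_le_of_forall_two_mul_le {M : Matrix ι ι ℝ} {r : ι → ℝ} {c : ℝ}
    (h : ∀ s, 2 * (r ⬝ᵥ s) ≤ (M *ᵥ s) ⬝ᵥ s + c) (w : ι → ℝ) :
    (r ⬝ᵥ w) ^ 2 ≤ c * ((M *ᵥ w) ⬝ᵥ w) :=
  sq_le_mul_of_forall_two_mul_le fun t => by
    have := h (t • w)
    rw [quadForm_smul, dotProduct_smul, smul_eq_mul] at this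
    linarith

theorem eq_zero_of_forall_two_mul_dotProduct_le {M : Matrix ι ι ℝ} {d : ι → ℝ}
    (h : ∀ s, 2 * (d ⬝ᵥ s) ≤ (M *ᵥ s) ⬝ᵥ s) : d = 0 := by
  have hd := sq_dotProduct_le_of_forall_two_mul_le (c := 0) (by simpa using h) d
  rw [zero_mul] at hd
  exact dotProduct_self_eq_zero.mp
    (pow_eq_zero_iff two_ne_zero |>.mp (le_antisymm hd (sq_nonneg _)))

theorem posSemidef_sub_inv_smul_vecMulVec {M : Matrix ι ι ℝ} (hM : M.PosSemidef) {r : ι → ℝ}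
    {c : ℝ} (hc : 0 ≤ c) (h : ∀ w, (r ⬝ᵥ w) ^ 2 ≤ c * ((M *ᵥ w) ⬝ᵥ w)) :
    (M - c⁻¹ • vecMulVec r r).PosSemidef := by
  have hrr : (vecMulVec r r).PosSemidef := by
    simpa using posSemidef_vecMulVec_self_star r
  refine .of_dotProduct_mulVec_nonneg
    (hM.isHermitian.sub (hrr.smul (inv_nonneg.2 hc)).isHermitian) fun w => ?_
  have hQ : 0 ≤ (M *ᵥ w) ⬝ᵥ w := by simpa [dotProduct_comm] using hM.dotProduct_mulVec_nonneg w
  have hcc : c⁻¹ * c ≤ 1 := by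
    rcases hc.eq_or_lt with rfl | hc
    · simp
    · rw [inv_mul_cancel₀ hc.ne']
  have := mul_le_mul_of_nonneg_left (h w) (inv_nonneg.2 hc)
  rw [star_trivial, sub_mulVec, dotProduct_sub, smul_mulVec, vecMulVec_mulVec, op_smul_eq_smul,
    dotProduct_smul, dotProduct_smul, smul_eq_mul, smul_eq_mul, dotProduct_comm w r,
    dotProduct_comm w]
  nlinarith [mul_le_mul_of_nonneg_right hcc hQ]

def QuadPinched (A B : Matrix ι ι ℝ) (f : (ι → ℝ) → ℝ) (x p : ι → ℝ) : Prop :=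
  ∀ w, (1/2) * ((A *ᵥ w) ⬝ᵥ w) ≤ f (x + w) - f x - p ⬝ᵥ w ∧
    f (x + w) - f x - p ⬝ᵥ w ≤ (1/2) * ((B *ᵥ w) ⬝ᵥ w)

def pinchingCone (A B : Matrix ι ι ℝ) : Set ((ι → ℝ) × (ι → ℝ)) :=
  {v | ∀ s, (A *ᵥ s) ⬝ᵥ s + 2 * (v.2 ⬝ᵥ s) + v.2 ⬝ᵥ v.1 ≤ (B *ᵥ (s + v.1)) ⬝ᵥ (s + v.1)}

theorem isBigO_quadForm (M : Matrix ι ι ℝ) (l : Filter (ι → ℝ)) :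
    (fun w => (M *ᵥ w) ⬝ᵥ w) =O[l] fun w => ‖w‖ ^ 2 := by
  have hcoord (i : ι) : (fun w : ι → ℝ => w i) =O[l] fun w => ‖w‖ :=
    .of_norm_le fun w => norm_le_pi_norm w i
  simp only [dotProduct, mulVec, sq]
  exact .fun_sum fun i _ => (IsBigO.fun_sum fun j _ => (hcoord j).const_mul_left (M i j)).mul
    (hcoord i)

theorem quadPinched_of_forall_sub_le {A B : Matrix ι ι ℝ} {f g : (ι → ℝ) → ℝ} {x lf lg : ι → ℝ}
    (hf : ∀ y, f y - f x - lf ⬝ᵥ (y - x) ≤ (1/2) * (B *ᵥ (y - x)) ⬝ᵥ (y - x))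
    (hg : ∀ y, (-g) y - (-g) x - lg ⬝ᵥ (y - x) ≤ (1/2) * ((-A) *ᵥ (y - x)) ⬝ᵥ (y - x))
    (hx : ∀ y, f x - g x ≤ f y - g y) :
    QuadPinched A B f x lf := by
  have hup (w : ι → ℝ) : f (x + w) - f x - lf ⬝ᵥ w ≤ (1/2) * ((B *ᵥ w) ⬝ᵥ w) := by
    simpa using hf (x + w)
  have hlo (w : ι → ℝ) : (1/2) * ((A *ᵥ w) ⬝ᵥ w) ≤ f (x + w) - f x - (-lg) ⬝ᵥ w := by
    have := hg (x + w)
    simp only [add_sub_cancel_left, Pi.neg_apply, neg_mulVec, neg_dotProduct] at this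
    rw [neg_dotProduct]
    linarith [hx (x + w)]
  -- the two supporting paraboloids touch at `x`, so their slopes agree
  have hslope : -lg - lf = 0 := eq_zero_of_forall_two_mul_dotProduct_le (M := B - A) fun w => by
    rw [sub_dotProduct, sub_mulVec, sub_dotProduct]
    linarith [hup w, hlo w]
  rw [sub_eq_zero] at hslope
  exact fun w => ⟨hslope ▸ hlo w, hup w⟩

theorem QuadPinched.hasFDerivAt {A B : Matrix ι ι ℝ} {f : (ι → ℝ) → ℝ} {x p : ι → ℝ}
    (h : QuadPinched A B f x p) :
    HasFDerivAt f (LinearMap.toContinuousLinearMap (dotProductBilin ℝ ℝ p)) x := by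
  have hO : (fun w => f (x + w) - f x - p ⬝ᵥ w) =O[𝓝 0] fun w => ‖w‖ ^ 2 := by
    refine IsBigO.trans (.of_norm_le (g := fun w => ‖(A *ᵥ w) ⬝ᵥ w‖ + ‖(B *ᵥ w) ⬝ᵥ w‖)
      fun w => ?_) ((isBigO_quadForm A _).norm_left.add (isBigO_quadForm B _).norm_left)
    simp only [Real.norm_eq_abs]
    rw [abs_le]
    constructor <;> linarith [h w, neg_abs_le ((A *ᵥ w) ⬝ᵥ w), le_abs_self ((B *ᵥ w) ⬝ᵥ w),
      abs_nonneg ((A *ᵥ w) ⬝ᵥ w), abs_nonneg ((B *ᵥ w) ⬝ᵥ w)]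
  rw [hasFDerivAt_iff_isLittleO_nhds_zero]
  simpa using hO.trans_isLittleO (isLittleO_norm_pow_id one_lt_two)

theorem smul_mem_pinchingCone {A B : Matrix ι ι ℝ} {v : (ι → ℝ) × (ι → ℝ)}
    (hv : v ∈ pinchingCone A B) {t : ℝ} (ht : t ≠ 0) : t • v ∈ pinchingCone A B := by
  intro s
  obtain ⟨u, rfl⟩ : ∃ u, s = t • u := ⟨t⁻¹ • s, by rw [smul_smul, mul_inv_cancel₀ ht, one_smul]⟩
  have := mul_le_mul_of_nonneg_left (hv u) (sq_nonneg t)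
  rw [Prod.smul_snd, Prod.smul_fst, ← smul_add, quadForm_smul, quadForm_smul]
  simp only [smul_dotProduct, dotProduct_smul, smul_eq_mul] at this ⊢
  linarith

theorem QuadPinched.sub_mem_pinchingCone {A B : Matrix ι ι ℝ} {f : (ι → ℝ) → ℝ}
    {x y p q : ι → ℝ} (hx : QuadPinched A B f x p) (hy : QuadPinched A B f y q) :
    (x, p) - (y, q) ∈ pinchingCone A B := by
  intro s
  have h1 := (hx s).1
  have h2 := (hy (-s)).1
  have h3 := (hx (-(s + (x - y)))).2
  have h4 := (hy (s + (x - y))).2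
  rw [show y + -s = x + -(s + (x - y)) by abel] at h2
  rw [show y + (s + (x - y)) = x + s by abel] at h4
  simp only [Prod.fst_sub, Prod.snd_sub, mulVec_neg, dotProduct_neg, neg_dotProduct, neg_neg,
    dotProduct_add, sub_dotProduct, dotProduct_sub] at h1 h2 h3 h4 ⊢
  linarith

theorem isClosed_pinchingCone (A B : Matrix ι ι ℝ) : IsClosed (pinchingCone A B) := by
  simp only [pinchingCone, Set.ofPred_forall]
  exact isClosed_iInter fun s => isClosed_le (by fun_prop) (by fun_prop)

end

theorem QuadPinched.gradVec_eq {n : ℕ} {A B : Matrix (Fin n) (Fin n) ℝ} {f : (Fin n → ℝ) → ℝ}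
    {x p : Fin n → ℝ} (h : QuadPinched A B f x p) : gradVec f x = p := by
  funext i
  simp [gradVec, h.hasFDerivAt.fderiv, dotProduct_single]

theorem pinchingCone_subset_coneBetween {n : ℕ} {A B : Matrix (Fin n) (Fin n) ℝ}
    (hB : B.IsSymm) (hU : (B - A).PosSemidef) : pinchingCone A B ⊆ coneBetween A B := by
  rintro ⟨h, k⟩ hv
  set r := B *ᵥ h - k
  set c := r ⬝ᵥ h
  have hr (s : Fin n → ℝ) : 2 * (r ⬝ᵥ s) ≤ ((B - A) *ᵥ s) ⬝ᵥ s + c := by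
    have := hv (-s)
    have hsymm : (B *ᵥ s) ⬝ᵥ h = (B *ᵥ h) ⬝ᵥ s := by
      rw [← hB.eq, mulVec_transpose, ← dotProduct_mulVec, dotProduct_comm, hB.eq]
    simp only [r, c, mulVec_neg, mulVec_add, dotProduct_neg, neg_dotProduct, add_dotProduct,
      dotProduct_add, sub_dotProduct, sub_mulVec] at this ⊢
    linarith
  have hc : 0 ≤ c := by simpa using hr 0
  have hsq := sq_dotProduct_le_of_forall_two_mul_le hr
  -- when `c = 0` the bound forces `r = 0`, so the junk value `0⁻¹ = 0` is harmless below
  have hcr : (c⁻¹ * c) • r = r := by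
    rcases hc.eq_or_lt with hc0 | hc0
    · have := hsq r
      rw [← hc0, zero_mul] at this
      simp [dotProduct_self_eq_zero.mp (pow_eq_zero_iff two_ne_zero |>.mp
        (le_antisymm this (sq_nonneg _)))]
    · rw [inv_mul_cancel₀ hc0.ne', one_smul]
  have hrr : (vecMulVec r r).PosSemidef := by simpa using posSemidef_vecMulVec_self_star r
  refine ⟨B - c⁻¹ • vecMulVec r r, hB.sub (IsSymm.smul (transpose_vecMulVec r r) c⁻¹), ?_, ?_, ?_⟩
  · rw [sub_right_comm]
    exact posSemidef_sub_inv_smul_vecMulVec hU hc hsq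
  · rw [sub_sub_cancel]
    exact hrr.smul (inv_nonneg.2 hc)
  · rw [sub_mulVec, smul_mulVec, vecMulVec_mulVec, op_smul_eq_smul, smul_smul, hcr]
    simp [r]

theorem stmt19_general (n : ℕ) (A B : Matrix (Fin n) (Fin n) ℝ)
    (hB : B.IsSymm) (hU : (B - A).PosDef)
    (f g : (Fin n → ℝ) → ℝ)
    (hf : ∀ x : Fin n → ℝ, ∃ l : Fin n → ℝ, ∀ y : Fin n → ℝ,
      f y - f x - l ⬝ᵥ (y - x) ≤ (1/2) * (B *ᵥ (y - x)) ⬝ᵥ (y - x))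
    (hg : ∀ x : Fin n → ℝ, ∃ l : Fin n → ℝ, ∀ y : Fin n → ℝ,
      (-g) y - (-g) x - l ⬝ᵥ (y - x) ≤ (1/2) * ((-A) *ᵥ (y - x)) ⬝ᵥ (y - x))
    (K : Set (Fin n → ℝ)) (hK : K = {x | ∀ y, f x - g x ≤ f y - g y})
    (I : Set ((Fin n → ℝ) × (Fin n → ℝ)))
    (hI : I = {p | p.1 ∈ K ∧ p.2 = gradVec f p.1}) :
    ∀ z ∈ I, paratingent I z ⊆ coneBetween A B := by
  have hpinched : ∀ z ∈ I, QuadPinched A B f z.1 z.2 := by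
    rintro ⟨x, p⟩ hz
    rw [hI, hK] at hz
    obtain ⟨hmin, rfl : p = gradVec f x⟩ := hz
    obtain ⟨lf, hlf⟩ := hf x
    obtain ⟨lg, hlg⟩ := hg x
    have hpinch := quadPinched_of_forall_sub_le hlf hlg hmin
    rwa [hpinch.gradVec_eq]
  rintro - - v ⟨t, zs, ws, hmem, -, -, hlim⟩
  refine pinchingCone_subset_coneBetween hB hU.posSemidef <|
    (isClosed_pinchingCone A B).mem_of_tendsto hlim (.of_forall fun m => ?_)
  obtain ⟨ht, hz, hw⟩ := hmem m
  exact smul_mem_pinchingCone ((hpinched _ hz).sub_mem_pinchingCone (hpinched _ hw)) ht.ne'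

theorem stmt19 (n : ℕ) (A B : Matrix (Fin n) (Fin n) ℝ)
    (hA : A.IsSymm) (hB : B.IsSymm) (hU : (B - A).PosDef)
    (f g : (Fin n → ℝ) → ℝ)
    (hf : ∀ x : Fin n → ℝ, ∃ l : Fin n → ℝ, ∀ y : Fin n → ℝ,
      f y - f x - l ⬝ᵥ (y - x) ≤ (1/2) * (B *ᵥ (y - x)) ⬝ᵥ (y - x))
    (hg : ∀ x : Fin n → ℝ, ∃ l : Fin n → ℝ, ∀ y : Fin n → ℝ,
      (-g) y - (-g) x - l ⬝ᵥ (y - x) ≤ (1/2) * ((-A) *ᵥ (y - x)) ⬝ᵥ (y - x))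
    (hfg : ∀ x, g x ≤ f x)
    (K : Set (Fin n → ℝ)) (hK : K = {x | ∀ y, f x - g x ≤ f y - g y})
    (I : Set ((Fin n → ℝ) × (Fin n → ℝ)))
    (hI : I = {p | p.1 ∈ K ∧ p.2 = gradVec f p.1}) :
    ∀ z ∈ I, paratingent I z ⊆ coneBetween A B :=
  stmt19_general n A B hB hU f g hf hg K hK I hI
end
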